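/- arXiv:2011.13589 — 4 statements merged into one kernel-verified Lean document; each statement's English description precedes it below -/
import Mathlib

section
/- Let C = {ω(1), ..., ω(M)} ⊂ B_*(X_A) be a prefix code. Then C has the unique factorization property for finite words (for any admissible word γ there exists η with γη admissible and a unique finite sequence (i_1,...,i_k) with γη = ω(i_1)⋯ω(i_k)) if and only if every point x ∈ X_A admits a unique factorization x = ω(i_1)ω(i_2)ω(i_3)⋯ as an infinite concatenation of words from C. -/
namespace TMS

/-- A `{0,1}` transition matrix on `N` symbols, as a `Bool`-valued function. -/
abbrev Mat (N : ℕ) := Fin N → Fin N → Bool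

/-- A finite word is (locally) admissible: all consecutive transitions are allowed. -/
def Adm {N : ℕ} (A : Mat N) (w : List (Fin N)) : Prop :=
  List.Chain' (fun a b => A a b = true) w

instance {N : ℕ} (A : Mat N) (w : List (Fin N)) : Decidable (Adm A w) :=
  inferInstanceAs (Decidable (List.IsChain _ w))

/-- The one-sided shift space `X_A`. -/
def SSpace {N : ℕ} (A : Mat N) : Set (ℕ → Fin N) :=
  {x | ∀ n, A (x n) (x (n + 1)) = true}

/-- The shift on sequences. -/
def shift {N : ℕ} (x : ℕ → Fin N) : ℕ → Fin N := fun n => x (n + 1)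

/-- The shift as a self-map of the shift space. -/
def shiftS {N : ℕ} (A : Mat N) (x : ↥(SSpace A)) : ↥(SSpace A) :=
  ⟨shift x.1, fun n => x.2 (n + 1)⟩

/-- `x` begins with the finite word `w`. -/
def Begins {N : ℕ} (x : ℕ → Fin N) (w : List (Fin N)) : Prop :=
  ∀ i (h : i < w.length), x i = w.get ⟨i, h⟩

/-- A word belongs to `B_*(X_A)`: it occurs at the beginning of some point of `X_A`. -/
def AdmX {N : ℕ} (A : Mat N) (w : List (Fin N)) : Prop :=
  ∃ x ∈ SSpace A, Begins x w

/-- The cylinder set `U_w ⊂ X_A`. -/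
def Cyl {N : ℕ} (A : Mat N) (w : List (Fin N)) : Set (ℕ → Fin N) :=
  {x ∈ SSpace A | Begins x w}

/-- A finite family of words is a prefix code: the words are pairwise distinct and
no word is an initial segment of another. -/
def IsPrefixCode {N M : ℕ} (ω : Fin M → List (Fin N)) : Prop :=
  Function.Injective ω ∧ ∀ i j : Fin M, i ≠ j → ¬ (ω i <+: ω j)

/-- Starting position of the `n`-th block in the factorization of a point along
the index sequence `f`. -/
def pos {N M : ℕ} (ω : Fin M → List (Fin N)) (f : ℕ → Fin M) : ℕ → ℕ
  | 0 => 0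
  | n + 1 => pos ω f n + (ω (f n)).length

/-- The point `x` factors as the infinite concatenation `ω (f 0) ω (f 1) ⋯`. -/
def Factors {N M : ℕ} (ω : Fin M → List (Fin N)) (x : ℕ → Fin N) (f : ℕ → Fin M) : Prop :=
  ∀ n, Begins (fun k => x (pos ω f n + k)) (ω (f n))

/-- Matrix irreducibility: from any symbol there is an admissible path to any other. -/
def IrreducibleMat {N : ℕ} (A : Mat N) : Prop :=
  ∀ i j : Fin N, ∃ w : List (Fin N), Adm A (i :: (w ++ [j]))

/-- Permutation matrix: every row and every column has exactly one nonzero entry. -/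
def IsPermMat {N : ℕ} (A : Mat N) : Prop :=
  (∀ i, ∃! j, A i j = true) ∧ (∀ j, ∃! i, A i j = true)

/-- A right Markov code for `(X_A, σ_A)`: a prefix code of nonempty admissible words
with the unique factorization property, shift invariance, and irreducibility. -/
structure IsRightMarkovCode {N M : ℕ} (A : Mat N) (ω : Fin M → List (Fin N)) : Prop where
  adm : ∀ i, AdmX A (ω i)
  ne : ∀ i, ω i ≠ []
  prefixCode : IsPrefixCode ω
  uniqueFact : ∀ γ, AdmX A γ → ∃ η, AdmX A (γ ++ η) ∧
      ∃! l : List (Fin M), γ ++ η = (l.map ω).flatten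
  shiftInv : ∃ L : ℕ, 0 < L ∧ ∀ l : List (Fin M), l.length = L → AdmX A ((l.map ω).flatten) →
      ∃ l' : List (Fin M), ((l.map ω).flatten).tail = (l'.map ω).flatten
  irr : ∀ i j, ∃ l : List (Fin M), AdmX A (ω i ++ (l.map ω).flatten ++ ω j)

/-- The induced matrix `A(C)`: `A(C)(i,j) = 1` iff `ω i ω j` is admissible. -/
def matC {N M : ℕ} (A : Mat N) (ω : Fin M → List (Fin N)) : Mat M :=
  fun i j => decide (Adm A (ω i ++ ω j))

/-- Continuous orbit equivalence of one-sided topological Markov shifts. -/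
def COE {N N' : ℕ} (A : Mat N) (B : Mat N') : Prop :=
  ∃ h : ↥(SSpace A) ≃ₜ ↥(SSpace B),
    (∃ k₁ l₁ : ↥(SSpace A) → ℕ, Continuous k₁ ∧ Continuous l₁ ∧
      ∀ x, (shiftS B)^[k₁ x] (h (shiftS A x)) = (shiftS B)^[l₁ x] (h x)) ∧
    (∃ k₂ l₂ : ↥(SSpace B) → ℕ, Continuous k₂ ∧ Continuous l₂ ∧
      ∀ y, (shiftS A)^[k₂ y] (h.symm (shiftS B y)) = (shiftS A)^[l₂ y] (h.symm y))

/-! The point factorization is built greedily: finite unique factorization forces every point of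
`X_A` to begin with a code word (take a prefix longer than all code words and complete it), so one
can keep stripping code words off the front. The prefix property makes each stripped word the
only possible one, both for points and for finite words. -/

variable {N M : ℕ}

section Begins

variable {x : ℕ → Fin N} {u v : List (Fin N)}

lemma Begins.of_prefix (hv : Begins x v) (h : u <+: v) : Begins x u := by
  obtain ⟨t, rfl⟩ := h
  intro i hi
  rw [hv i (by simp only [List.length_append]; omega)]
  simp [List.getElem_append_left hi]

lemma Begins.prefix_of_length_le (hu : Begins x u) (hv : Begins x v)
    (h : u.length ≤ v.length) : u <+: v := by
  rw [List.prefix_iff_eq_take]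
  refine List.ext_getElem (by simp [h]) fun i h₁ h₂ => ?_
  have := (hu i h₁).symm.trans (hv i (by omega))
  simpa using this

lemma begins_append :
    Begins x (u ++ v) ↔ Begins x u ∧ Begins (fun k => x (u.length + k)) v := by
  refine ⟨fun h => ⟨h.of_prefix (List.prefix_append u v), fun i hi => ?_⟩,
    fun ⟨hu, hv⟩ i hi => ?_⟩
  · show x (u.length + i) = _
    rw [h (u.length + i) (by simp only [List.length_append]; omega)]
    simp [List.getElem_append_right]
  · by_cases hiu : i < u.length
    · rw [hu i hiu]
      simp [List.getElem_append_left hiu]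
    · have := hv (i - u.length) (by simp only [List.length_append] at hi; omega)
      simp only [Nat.add_sub_cancel' (Nat.le_of_not_lt hiu)] at this
      rw [this]
      simp [List.getElem_append_right (Nat.le_of_not_lt hiu)]

lemma begins_ofFn (L : ℕ) : Begins x (List.ofFn fun j : Fin L => x j) := by
  intro i hi
  simp

end Begins

lemma add_mem_SSpace {A : Mat N} {x : ℕ → Fin N} (hx : x ∈ SSpace A) (m : ℕ) :
    (fun k => x (m + k)) ∈ SSpace A :=
  fun n => hx (m + n)

namespace IsPrefixCode

variable {ω : Fin M → List (Fin N)}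

lemma eq_of_prefix_of_prefix (hpc : IsPrefixCode ω) {i j : Fin M} {w : List (Fin N)}
    (hi : ω i <+: w) (hj : ω j <+: w) : i = j := by
  by_contra hij
  rcases List.prefix_or_prefix_of_prefix hi hj with h | h
  · exact hpc.2 i j hij h
  · exact hpc.2 j i (Ne.symm hij) h

lemma eq_of_begins (hpc : IsPrefixCode ω) {x : ℕ → Fin N} {i j : Fin M}
    (hi : Begins x (ω i)) (hj : Begins x (ω j)) : i = j := by
  rcases le_total (ω i).length (ω j).length with h | h
  · exact hpc.eq_of_prefix_of_prefix (hi.prefix_of_length_le hj h) (List.prefix_refl _)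
  · exact hpc.eq_of_prefix_of_prefix (List.prefix_refl _) (hj.prefix_of_length_le hi h)

lemma flatten_map_injective (hpc : IsPrefixCode ω) (hne : ∀ i, ω i ≠ []) :
    Function.Injective fun l : List (Fin M) => (l.map ω).flatten := by
  intro l l' h
  induction l generalizing l' with
  | nil => cases l' <;> simp_all
  | cons i t ih =>
    cases l' with
    | nil => simp_all
    | cons j t' =>
      simp only [List.map_cons, List.flatten_cons] at h
      obtain rfl : i = j :=
        hpc.eq_of_prefix_of_prefix (List.prefix_append _ _) (h.symm ▸ List.prefix_append _ _)
      rw [ih (List.append_cancel_left h)]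

end IsPrefixCode

section Factors

variable {ω : Fin M → List (Fin N)} {x : ℕ → Fin N} {f g : ℕ → Fin M}

lemma pos_congr {n : ℕ} (h : ∀ m < n, f m = g m) : pos ω f n = pos ω g n := by
  induction n with
  | zero => rfl
  | succ n ih => simp only [pos, ih fun m hm => h m (by omega), h n n.lt_succ_self]

lemma length_flatten_map_range (f : ℕ → Fin M) (n : ℕ) :
    (((List.range n).map f).map ω).flatten.length = pos ω f n := by
  induction n with
  | zero => rfl
  | succ n ih => simp [List.range_succ, ← ih, pos]

lemma le_pos (hne : ∀ i, ω i ≠ []) (f : ℕ → Fin M) (n : ℕ) : n ≤ pos ω f n := by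
  induction n with
  | zero => rfl
  | succ n ih =>
    have := List.length_pos_iff.mpr (hne (f n))
    simp only [pos]
    omega

lemma Factors.begins_flatten_map_range (hf : Factors ω x f) (n : ℕ) :
    Begins x (((List.range n).map f).map ω).flatten := by
  induction n with
  | zero => intro i hi; simp at hi
  | succ n ih =>
    simp only [List.range_succ, List.map_append, List.flatten_append, List.map_cons, List.map_nil,
      List.flatten_cons, List.flatten_nil, List.append_nil, begins_append]
    exact ⟨ih, length_flatten_map_range f n ▸ hf n⟩

lemma IsPrefixCode.factors_unique (hpc : IsPrefixCode ω) (hf : Factors ω x f)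
    (hg : Factors ω x g) : f = g := by
  funext n
  induction n using Nat.strong_induction_on with
  | _ n ih => exact hpc.eq_of_begins (hf n) (pos_congr ih ▸ hg n)

lemma exists_factors (h : ∀ m, ∃ i, Begins (fun k => x (m + k)) (ω i)) :
    ∃ f, Factors ω x f := by
  choose c hc using h
  let p : ℕ → ℕ := fun n => Nat.rec 0 (fun _ m => m + (ω (c m)).length) n
  have hp : ∀ n, pos ω (c ∘ p) n = p n := by
    intro n
    induction n with
    | zero => rfl
    | succ n ih => simp only [pos, ih, Function.comp_apply]; rfl
  exact ⟨c ∘ p, fun n => hp n ▸ hc (p n)⟩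

lemma Factors.exists_append_eq_flatten (hne : ∀ i, ω i ≠ []) (hf : Factors ω x f)
    {γ : List (Fin N)} (hγ : Begins x γ) :
    ∃ (η : List (Fin N)) (l : List (Fin M)),
      Begins x (γ ++ η) ∧ γ ++ η = (l.map ω).flatten := by
  have hlen : γ.length ≤ (((List.range γ.length).map f).map ω).flatten.length :=
    (length_flatten_map_range f _).symm ▸ le_pos hne f _
  obtain ⟨η, hη⟩ := hγ.prefix_of_length_le (hf.begins_flatten_map_range _) hlen
  exact ⟨η, _, hη ▸ hf.begins_flatten_map_range _, hη⟩

end Factors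

lemma exists_begins_of_forall_append_eq_flatten {A : Mat N} {ω : Fin M → List (Fin N)}
    (h : ∀ γ, AdmX A γ →
      ∃ (η : List (Fin N)) (l : List (Fin M)), γ ++ η = (l.map ω).flatten)
    {y : ℕ → Fin N} (hy : y ∈ SSpace A) : ∃ i, Begins y (ω i) := by
  set L := (Finset.univ.sup fun i => (ω i).length) + 1
  set γ := List.ofFn fun j : Fin L => y j
  obtain ⟨η, l, hl⟩ := h γ ⟨y, hy, begins_ofFn L⟩
  cases l with
  | nil => simp [γ, L] at hl
  | cons i t =>
    refine ⟨i, (begins_ofFn L).of_prefix ?_⟩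
    have hi : (ω i).length ≤ γ.length := by
      have := Finset.le_sup (f := fun i => (ω i).length) (Finset.mem_univ i)
      simp only [γ, L, List.length_ofFn]
      omega
    simp only [List.map_cons, List.flatten_cons] at hl
    exact List.prefix_of_prefix_length_le (List.prefix_append _ _)
      (hl ▸ List.prefix_append _ _) hi

theorem uniqueFact_iff_point_factorization_general {N M : ℕ} (A : Mat N)
    (ω : Fin M → List (Fin N)) (hne : ∀ i, ω i ≠ [])
    (hpc : IsPrefixCode ω) :
    (∀ γ, AdmX A γ → ∃ η, AdmX A (γ ++ η) ∧
        ∃! l : List (Fin M), γ ++ η = (l.map ω).flatten) ↔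
      (∀ x ∈ SSpace A, ∃! f : ℕ → Fin M, Factors ω x f) := by
  constructor
  · intro hUF x hx
    have hcomplete : ∀ γ, AdmX A γ →
        ∃ (η : List (Fin N)) (l : List (Fin M)), γ ++ η = (l.map ω).flatten :=
      fun γ hγ => (hUF γ hγ).imp fun _ ⟨_, l, hl, _⟩ => ⟨l, hl⟩
    obtain ⟨f, hf⟩ := exists_factors fun m =>
      exists_begins_of_forall_append_eq_flatten hcomplete (add_mem_SSpace hx m)
    exact ⟨f, hf, fun g hg => hpc.factors_unique hg hf⟩
  · rintro hP γ ⟨x, hx, hγ⟩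
    obtain ⟨f, hf, -⟩ := hP x hx
    obtain ⟨η, l, hbegins, hl⟩ := hf.exists_append_eq_flatten hne hγ
    exact ⟨η, ⟨x, hx, hbegins⟩, l, hl,
      fun l' hl' => hpc.flatten_map_injective hne (hl'.symm.trans hl)⟩

/-- For a prefix code, the finite unique factorization property holds
iff every point of `X_A` admits a unique infinite factorization into code words. -/
theorem uniqueFact_iff_point_factorization {N M : ℕ} (A : Mat N)
    (hA : IrreducibleMat A) (hnp : ¬ IsPermMat A)
    (ω : Fin M → List (Fin N)) (hadm : ∀ i, AdmX A (ω i)) (hne : ∀ i, ω i ≠ [])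
    (hpc : IsPrefixCode ω) :
    (∀ γ, AdmX A γ → ∃ η, AdmX A (γ ++ η) ∧
        ∃! l : List (Fin M), γ ++ η = (l.map ω).flatten) ↔
      (∀ x ∈ SSpace A, ∃! f : ℕ → Fin M, Factors ω x f) :=
  uniqueFact_iff_point_factorization_general A ω hne hpc

end TMS
end

section
/- The one-sided full N-shift (X_[N], σ_[N]) has only the trivial right Markov code, i.e., any right Markov code for the full N-shift equals the alphabet {1,2,...,N} viewed as the set of words of length 1. -/
namespace TMS

/-!
For a letter `a`, unique factorization of a long block `aᵏ` shows that some code word is a power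
`aʲ`, and the prefix property makes it the only code word consisting of `a`'s. Shift invariance
applied to `(aʲ)ᴸ` writes `a^(Lj - 1)` as a concatenation of code words, necessarily copies of `aʲ`,
so `j ∣ Lj - 1` and `j = 1`. Thus every letter is a code word, and by the prefix property no other
word can be one.
-/

open List

namespace IsPrefixCode

variable {N M : ℕ} {ω : Fin M → List (Fin N)}

lemma eq_of_prefix (hω : IsPrefixCode ω) {i k : Fin M} (h : ω i <+: ω k) : i = k := by
  by_contra hik
  exact hω.2 i k hik h

lemma eq_of_eq_replicate (hω : IsPrefixCode ω) {i k : Fin M} {a : Fin N} {m n : ℕ}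
    (hi : ω i = replicate m a) (hk : ω k = replicate n a) : i = k := by
  rcases le_total m n with h | h
  · exact hω.eq_of_prefix (by simp [hi, hk, prefix_replicate_iff, h])
  · exact (hω.eq_of_prefix (by simp [hi, hk, prefix_replicate_iff, h])).symm

lemma map_eq_replicate_of_flatten_eq_replicate (hω : IsPrefixCode ω) {i : Fin M} {a : Fin N}
    {j n : ℕ} (hi : ω i = replicate j a) {l : List (Fin M)}
    (hl : (l.map ω).flatten = replicate n a) : l.map ω = replicate l.length (ω i) := by
  refine eq_replicate_iff.mpr ⟨length_map _, ?_⟩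
  intro _ hmem
  obtain ⟨k, hk, rfl⟩ := mem_map.mp hmem
  obtain ⟨m, -, hm⟩ :=
    sublist_replicate_iff.mp (hl ▸ sublist_flatten_of_mem (mem_map_of_mem hk))
  rw [hω.eq_of_eq_replicate hm hi]

end IsPrefixCode

lemma admX_full {N : ℕ} (hN : 0 < N) (w : List (Fin N)) : AdmX (fun _ _ => true) w :=
  ⟨fun n => w.getD n ⟨0, hN⟩, fun _ => rfl, fun i h => by simp [getElem?_eq_getElem h]⟩

namespace IsRightMarkovCode

variable {N M : ℕ} {ω : Fin M → List (Fin N)}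

lemma exists_prefix {A : Mat N} (hC : IsRightMarkovCode A ω) {γ : List (Fin N)}
    (hγ : AdmX A γ) (hne : γ ≠ []) (hlen : ∀ i, (ω i).length ≤ γ.length) :
    ∃ i, ω i <+: γ := by
  obtain ⟨η, -, l, hl, -⟩ := hC.uniqueFact γ hγ
  cases l with
  | nil => exact absurd (append_eq_nil_iff.mp hl).1 hne
  | cons i l =>
    exact ⟨i, prefix_of_prefix_length_le ⟨(l.map ω).flatten, by simp [hl]⟩
      (prefix_append γ η) (hlen i)⟩

lemma exists_eq_replicate_of_full (hC : IsRightMarkovCode (fun _ _ => true) ω) (a : Fin N) :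
    ∃ i, ω i = replicate (ω i).length a := by
  classical
  set K := (Finset.univ.sup fun i => (ω i).length) + 1
  obtain ⟨i, hi⟩ := hC.exists_prefix (γ := replicate K a) (admX_full a.pos _)
    (by simp [K]) fun i => by
      simpa [K] using Nat.le_succ_of_le (Finset.le_sup (f := fun i => (ω i).length)
        (Finset.mem_univ i))
  exact ⟨i, (prefix_replicate_iff.mp hi).2⟩

lemma eq_one_of_eq_replicate_of_full (hC : IsRightMarkovCode (fun _ _ => true) ω)
    {i : Fin M} {a : Fin N} {j : ℕ} (hi : ω i = replicate j a) : j = 1 := by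
  have hj : 0 < j := Nat.pos_of_ne_zero fun h => hC.ne i (by simp [hi, h])
  obtain ⟨L, hL, hshift⟩ := hC.shiftInv
  obtain ⟨l, hl⟩ := hshift (replicate L i) length_replicate (admX_full a.pos _)
  rw [map_replicate, hi, flatten_replicate_replicate, tail_replicate] at hl
  have hlen := congrArg length hl
  rw [hC.prefixCode.map_eq_replicate_of_flatten_eq_replicate hi hl.symm, hi,
    flatten_replicate_replicate, length_replicate, length_replicate] at hlen
  have hpos : 0 < L * j := Nat.mul_pos hL hj
  have hsplit : L * j = l.length * j + 1 := by omega
  exact Nat.dvd_one.mp ((Nat.dvd_add_right (dvd_mul_left j _)).mp (hsplit ▸ dvd_mul_left j L))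

lemma exists_eq_singleton_of_full (hC : IsRightMarkovCode (fun _ _ => true) ω) (a : Fin N) :
    ∃ i, ω i = [a] := by
  obtain ⟨i, hi⟩ := hC.exists_eq_replicate_of_full a
  exact ⟨i, by rw [hi, hC.eq_one_of_eq_replicate_of_full hi, replicate_one]⟩

end IsRightMarkovCode

theorem full_shift_trivial_code_general {N M : ℕ}
    (ω : Fin M → List (Fin N))
    (hC : IsRightMarkovCode (fun _ _ => true) ω) :
    Set.range ω = Set.range (fun a : Fin N => [a]) := by
  ext w
  constructor
  · rintro ⟨i, rfl⟩
    obtain ⟨b, t, hbt⟩ := exists_cons_of_ne_nil (hC.ne i)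
    obtain ⟨k, hk⟩ := hC.exists_eq_singleton_of_full b
    have hki : k = i := hC.prefixCode.eq_of_prefix (by rw [hk, hbt]; exact ⟨t, rfl⟩)
    exact ⟨b, by rw [← hki, hk]⟩
  · rintro ⟨a, rfl⟩
    exact hC.exists_eq_singleton_of_full a

/-- The one-sided full `N`-shift has only the trivial right Markov code:
any right Markov code equals the alphabet, viewed as the words of length one. -/
theorem full_shift_trivial_code {N M : ℕ} (hN : 2 ≤ N)
    (ω : Fin M → List (Fin N))
    (hC : IsRightMarkovCode (fun _ _ => true) ω) :
    Set.range ω = Set.range (fun a : Fin N => [a]) :=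
  full_shift_trivial_code_general ω hC

end TMS
end

section
/- Let C be a right Markov code for (X_A, σ_A) with associated matrix A(C) = B and standard coding homeomorphism h : X_A → X_B. Then there exist continuous maps k_1, l_1 : X_A → ℤ_{≥0} such that σ_B^{k_1(x)}(h(σ_A(x))) = σ_B^{l_1(x)}(h(x)) for all x ∈ X_A. -/
namespace TMS

/-!
Every point of `X_A` factors uniquely as `ω(i₀)ω(i₁)⋯`: unique factorization completes a long
initial segment to a concatenation of code words, so some code word is a prefix of the point, and
by the prefix property only one is. Reading off the indices is a continuous bijection
`X_A → X_B`, hence a homeomorphism by compactness. By shift invariance, deleting the first symbol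
of `ω(i₀)⋯ω(i_{L-1})` leaves a concatenation `ω(j₁)⋯ω(j_m)`, so `h(σ_A x) = j₁⋯j_m i_L i_{L+1}⋯`;
take `l₁ = L` and `k₁(x) = m`, which depends only on `i₀, …, i_{L-1}`.
-/

variable {N M : ℕ} {ω : Fin M → List (Fin N)}

theorem shiftS_iterate_val (A : Mat N) (k : ℕ) (x : ↥(SSpace A)) :
    ((shiftS A)^[k] x).1 = Stream'.drop k x.1 := by
  induction k generalizing x with
  | zero => rfl
  | succ k ih => rw [Function.iterate_succ_apply, ih]; rfl

theorem begins_append_iff {x : ℕ → Fin N} {u v : List (Fin N)} :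
    Begins x (u ++ v) ↔ Begins x u ∧ Begins (fun k => x (u.length + k)) v := by
  constructor
  · intro h
    refine ⟨fun i hi => ?_, fun i hi => ?_⟩
    · simpa [List.getElem_append_left hi] using h i (by simp; omega)
    · simpa using h (u.length + i) (by simp; omega)
  · rintro ⟨hu, hv⟩ i hi
    by_cases hiu : i < u.length
    · simpa [List.getElem_append_left hiu] using hu i hiu
    · obtain ⟨j, rfl⟩ := Nat.exists_eq_add_of_le (not_lt.mp hiu)
      simpa using hv j (by simp at hi; omega)

theorem prefix_of_begins {x : ℕ → Fin N} {u v : List (Fin N)} (hu : Begins x u)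
    (hv : Begins x v) (h : u.length ≤ v.length) : u <+: v := by
  rw [List.prefix_iff_eq_take]
  refine List.ext_getElem (by simp [h]) fun i h₁ h₂ => ?_
  have hui := hu i h₁
  have hvi := hv i (by omega)
  simp only [List.get_eq_getElem] at hui hvi
  rw [List.getElem_take, ← hui, hvi]

theorem adm_of_begins {A : Mat N} {x : ℕ → Fin N} (hx : x ∈ SSpace A) {w : List (Fin N)}
    (h : Begins x w) : Adm A w := by
  refine List.isChain_iff_getElem.mpr fun i hi => ?_
  have h₀ := h i (by omega)
  have h₁ := h (i + 1) hi
  simp only [List.get_eq_getElem] at h₀ h₁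
  rw [← h₀, ← h₁]
  exact hx i

theorem pos_succ' (f : ℕ → Fin M) (n : ℕ) :
    pos ω f (n + 1) = (ω (f 0)).length + pos ω (fun j => f (j + 1)) n := by
  induction n with
  | zero => simp [pos]
  | succ n ih => rw [pos, ih, pos, Nat.add_assoc]

theorem factors_iff_cons {x : ℕ → Fin N} {f : ℕ → Fin M} :
    Factors ω x f ↔ Begins x (ω (f 0)) ∧
      Factors ω (fun k => x ((ω (f 0)).length + k)) (fun n => f (n + 1)) := by
  constructor
  · intro h
    refine ⟨by simpa [pos] using h 0, fun n => ?_⟩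
    simpa [pos_succ', Nat.add_assoc] using h (n + 1)
  · rintro ⟨h₀, h⟩ (_ | n)
    · simpa [pos] using h₀
    · simpa [pos_succ', Nat.add_assoc] using h n

theorem factors_append_iff {y : ℕ → Fin N} {l : List (Fin M)}
    {s : Stream' (Fin M)} :
    Factors ω y (l ++ₛ s) ↔ Begins y (l.map ω).flatten ∧
      Factors ω (fun k => y ((l.map ω).flatten.length + k)) s := by
  induction l generalizing y with
  | nil => simp [Begins]
  | cons a l ih =>
    rw [Stream'.cons_append_stream]
    refine factors_iff_cons.trans ?_
    simp only [List.map_cons, List.flatten_cons, begins_append_iff, List.length_append]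
    change (Begins y (ω a) ∧ Factors ω (fun k => y ((ω a).length + k)) (l ++ₛ s)) ↔ _
    simp only [ih, and_assoc, Nat.add_assoc]

theorem mem_SSpace_matC_of_factors {A : Mat N} {x : ℕ → Fin N} {f : ℕ → Fin M}
    (hx : x ∈ SSpace A) (hf : Factors ω x f) : f ∈ SSpace (matC A ω) := by
  intro n
  refine decide_eq_true (adm_of_begins (fun m => hx (pos ω f n + m)) ?_)
  refine begins_append_iff.mpr ⟨hf n, ?_⟩
  simpa [pos, Nat.add_assoc] using hf (n + 1)

theorem exists_begins_codeword {A : Mat N}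
    (hC : IsRightMarkovCode A ω) {x : ℕ → Fin N} (hx : x ∈ SSpace A) :
    ∃ i, Begins x (ω i) := by
  set n := Finset.univ.sup (fun i => (ω i).length) + 1
  have hγ : Begins x (List.ofFn fun k : Fin n => x k) := by
    intro i hi
    simp only [List.get_eq_getElem, List.getElem_ofFn]
  obtain ⟨η, -, l, hl, -⟩ := hC.uniqueFact _ ⟨x, hx, hγ⟩
  cases l with
  | nil => simp [n] at hl
  | cons i l =>
    have hlen : (ω i).length ≤ n := Nat.le_succ_of_le (Finset.le_sup (f := fun i => (ω i).length)
      (Finset.mem_univ i))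
    have hpre : ω i <+: (List.ofFn fun k : Fin n => x k) ++ η := by
      rw [hl, List.map_cons, List.flatten_cons]
      exact List.prefix_append _ _
    obtain ⟨t, ht⟩ := List.prefix_of_prefix_length_le hpre (List.prefix_append _ _)
      (by simpa using hlen)
    exact ⟨i, (begins_append_iff.mp (ht ▸ hγ)).1⟩

theorem eq_of_begins_codeword (hω : IsPrefixCode ω)
    {x : ℕ → Fin N} {i j : Fin M} (hi : Begins x (ω i)) (hj : Begins x (ω j)) : i = j := by
  by_contra hne
  rcases le_total (ω i).length (ω j).length with h | h
  · exact hω.2 i j hne (prefix_of_begins hi hj h)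
  · exact hω.2 j i (Ne.symm hne) (prefix_of_begins hj hi h)

def prefixWord (ω : Fin M → List (Fin N)) (f : ℕ → Fin M) (n : ℕ) : List (Fin N) :=
  ((Stream'.take n f).map ω).flatten

theorem prefixWord_succ (f : ℕ → Fin M) (n : ℕ) :
    prefixWord ω f (n + 1) = prefixWord ω f n ++ ω (f n) := by
  rw [prefixWord, prefixWord, Stream'.take_succ' (s := f)]
  simp [Stream'.get]

theorem length_prefixWord (f : ℕ → Fin M) (n : ℕ) : (prefixWord ω f n).length = pos ω f n := by
  induction n with
  | zero => rfl
  | succ n ih => rw [prefixWord_succ, List.length_append, ih, pos]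

theorem le_length_prefixWord (hne : ∀ i, ω i ≠ []) (f : ℕ → Fin M) (n : ℕ) :
    n ≤ (prefixWord ω f n).length := by
  induction n with
  | zero => exact Nat.zero_le _
  | succ n ih =>
    have := List.length_pos_iff.mpr (hne (f n))
    rw [prefixWord_succ, List.length_append]
    omega

theorem prefixWord_prefix (f : ℕ → Fin M) {m n : ℕ} (h : m ≤ n) :
    prefixWord ω f m <+: prefixWord ω f n :=
  ((Stream'.take_prefix_take_left m n f h).map ω).flatten

theorem begins_prefixWord {x : ℕ → Fin N} {f : ℕ → Fin M} (hf : Factors ω x f) (n : ℕ) :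
    Begins x (prefixWord ω f n) := by
  rw [← Stream'.append_take_drop n f] at hf
  exact (factors_append_iff.mp hf).1

theorem adm_prefixWord {A : Mat N} (hne : ∀ i, ω i ≠ []) {g : ℕ → Fin M}
    (hg : g ∈ SSpace (matC A ω)) (n : ℕ) : Adm A (prefixWord ω g (n + 1)) := by
  have hedge : ∀ m, Adm A (ω (g m) ++ ω (g (m + 1))) := fun m => of_decide_eq_true (hg m)
  induction n with
  | zero =>
    rw [prefixWord_succ, show prefixWord ω g 0 = [] from rfl, List.nil_append]
    exact (hedge 0).prefix (List.prefix_append _ _)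
  | succ n ih =>
    rw [prefixWord_succ] at ih
    rw [prefixWord_succ g (n + 1), prefixWord_succ g n]
    exact ih.append_overlap (hedge n) (hne _)

noncomputable def concatSeq (hne : ∀ i, ω i ≠ []) (g : ℕ → Fin M) (n : ℕ) : Fin N :=
  (prefixWord ω g (n + 1))[n]'(le_length_prefixWord hne g (n + 1))

theorem begins_concatSeq (hne : ∀ i, ω i ≠ []) (g : ℕ → Fin M) (n : ℕ) :
    Begins (concatSeq hne g) (prefixWord ω g n) := by
  intro i hi
  rw [List.get_eq_getElem, concatSeq]
  rcases le_total (i + 1) n with h | h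
  · exact (prefixWord_prefix g h).getElem _
  · exact ((prefixWord_prefix g h).getElem hi).symm

theorem factors_concatSeq (hne : ∀ i, ω i ≠ []) (g : ℕ → Fin M) :
    Factors ω (concatSeq hne g) g := by
  intro n
  have h := begins_concatSeq hne g (n + 1)
  rw [prefixWord_succ, begins_append_iff, length_prefixWord] at h
  exact h.2

theorem concatSeq_mem {A : Mat N} (hne : ∀ i, ω i ≠ []) {g : ℕ → Fin M}
    (hg : g ∈ SSpace (matC A ω)) : concatSeq hne g ∈ SSpace A := by
  intro n
  have hlen := le_length_prefixWord hne g (n + 1 + 1)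
  have h₀ := begins_concatSeq hne g (n + 1 + 1) n (by omega)
  have h₁ := begins_concatSeq hne g (n + 1 + 1) (n + 1) (by omega)
  simp only [List.get_eq_getElem] at h₀ h₁
  rw [h₀, h₁]
  exact List.isChain_iff_getElem.mp (adm_prefixWord hne hg (n + 1)) n (by omega)

theorem eq_concatSeq_of_factors (hne : ∀ i, ω i ≠ []) {x : ℕ → Fin N} {f : ℕ → Fin M}
    (hf : Factors ω x f) : x = concatSeq hne f := by
  funext n
  exact begins_prefixWord hf (n + 1) n (le_length_prefixWord hne f (n + 1))

theorem factors_shift {x : ℕ → Fin N} {f : ℕ → Fin M} {L : ℕ}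
    {l : List (Fin M)} (hf : Factors ω x f) (hne : prefixWord ω f L ≠ [])
    (htail : (prefixWord ω f L).tail = (l.map ω).flatten) :
    Factors ω (shift x) (l ++ₛ Stream'.drop L f) := by
  rw [← Stream'.append_take_drop L f] at hf
  obtain ⟨hbegin, hrest⟩ := factors_append_iff.mp hf
  change Begins x (prefixWord ω f L) at hbegin
  change Factors ω (fun k => x ((prefixWord ω f L).length + k)) _ at hrest
  obtain ⟨a, w, hw⟩ := List.exists_cons_of_ne_nil hne
  rw [hw, List.tail_cons] at htail
  rw [hw, ← List.singleton_append, begins_append_iff] at hbegin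
  rw [hw] at hrest
  have hx : shift x = fun k => x ([a].length + k) := funext fun k => congrArg x (Nat.add_comm _ _)
  refine factors_append_iff.mpr ⟨htail ▸ hx ▸ hbegin.2, ?_⟩
  rw [← htail]
  simpa [shift, Nat.add_right_comm _ 1] using hrest

theorem isClosed_SSpace (A : Mat N) : IsClosed (SSpace A) := by
  have h : SSpace A = ⋂ n, (fun x : ℕ → Fin N => (x n, x (n + 1))) ⁻¹' {p | A p.1 p.2 = true} := by
    ext x
    simp [SSpace]
  rw [h]
  exact isClosed_iInter fun n => (isClosed_discrete _).preimage (by fun_prop)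

instance (A : Mat N) : CompactSpace ↥(SSpace A) :=
  isCompact_iff_compactSpace.mp (isClosed_SSpace A).isCompact

theorem continuous_shiftS (A : Mat N) : Continuous (shiftS A) :=
  Continuous.subtype_mk (f := fun x : ↥(SSpace A) => shift x.1)
    (continuous_pi fun n => (continuous_apply (n + 1)).comp continuous_subtype_val) _

theorem isOpen_setOf_begins (A : Mat N) (w : List (Fin N)) :
    IsOpen {x : ↥(SSpace A) | Begins x.1 w} := by
  have h : {x : ↥(SSpace A) | Begins x.1 w} = ⋂ i : Fin w.length, {x | x.1 i = w.get i} := by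
    ext x
    simp [Begins, Fin.forall_iff]
  rw [h]
  exact isOpen_iInter_of_finite fun i =>
    (isOpen_discrete {w.get i}).preimage (f := fun x : ↥(SSpace A) => x.1 i)
      ((continuous_apply (i : ℕ)).comp continuous_subtype_val)

theorem continuous_stream_take {α : Type*} [TopologicalSpace α] [DiscreteTopology α] (n : ℕ) :
    Continuous fun s : ℕ → α => Stream'.take n s := by
  have h : (fun s : ℕ → α => Stream'.take n s) = fun s => List.ofFn fun j : Fin n => s j :=
    funext fun s => List.ext_getElem (by rw [Stream'.length_take n s, List.length_ofFn])
      fun i _ _ => by rw [Stream'.take_get (a := s), List.getElem_ofFn]; rfl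
  rw [h]
  exact (continuous_of_discreteTopology (f := List.ofFn)).comp
    (continuous_pi fun j : Fin n => continuous_apply (j : ℕ))

section Coding

variable {A : Mat N} (hC : IsRightMarkovCode A ω)

noncomputable def firstIdx (x : ↥(SSpace A)) : Fin M :=
  (exists_begins_codeword hC x.2).choose

theorem begins_firstIdx (x : ↥(SSpace A)) : Begins x.1 (ω (firstIdx hC x)) :=
  (exists_begins_codeword hC x.2).choose_spec

theorem firstIdx_eq_of_begins {x : ↥(SSpace A)} {i : Fin M} (h : Begins x.1 (ω i)) :
    firstIdx hC x = i :=
  eq_of_begins_codeword hC.prefixCode (begins_firstIdx hC x) h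

noncomputable def dropStep (x : ↥(SSpace A)) : ↥(SSpace A) :=
  (shiftS A)^[(ω (firstIdx hC x)).length] x

theorem dropStep_val (x : ↥(SSpace A)) :
    (dropStep hC x).1 = fun k => x.1 ((ω (firstIdx hC x)).length + k) := by
  rw [dropStep, shiftS_iterate_val]
  funext k
  exact congrArg x.1 (Nat.add_comm _ _)

noncomputable def codeSeq (x : ↥(SSpace A)) (n : ℕ) : Fin M :=
  firstIdx hC ((dropStep hC)^[n] x)

theorem factors_codeSeq (x : ↥(SSpace A)) : Factors ω x.1 (codeSeq hC x) := by
  intro n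
  induction n generalizing x with
  | zero =>
    simp only [pos, Nat.zero_add]
    exact begins_firstIdx hC x
  | succ n ih =>
    have h := ih (dropStep hC x)
    rw [dropStep_val] at h
    simp only [pos_succ', Nat.add_assoc]
    exact h

theorem codeSeq_eq_of_factors {x : ↥(SSpace A)} {f : ℕ → Fin M} (hf : Factors ω x.1 f) :
    codeSeq hC x = f := by
  funext n
  induction n generalizing x f with
  | zero => exact firstIdx_eq_of_begins hC (by simpa [pos] using hf 0)
  | succ n ih =>
    obtain ⟨h₀, hrest⟩ := factors_iff_cons.mp hf
    have hfirst : firstIdx hC x = f 0 := firstIdx_eq_of_begins hC h₀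
    refine ih (x := dropStep hC x) (f := fun n => f (n + 1)) ?_
    rwa [dropStep_val, hfirst]

theorem continuous_firstIdx : Continuous (firstIdx hC) := by
  refine continuous_discrete_rng.mpr fun i => ?_
  have h : firstIdx hC ⁻¹' {i} = {x | Begins x.1 (ω i)} :=
    Set.ext fun x => ⟨fun hx => hx ▸ begins_firstIdx hC x, firstIdx_eq_of_begins hC⟩
  rw [h]
  exact isOpen_setOf_begins A (ω i)

theorem continuous_dropStep : Continuous (dropStep hC) :=
  ((continuous_prod_of_discrete_left
      (f := fun p : Fin M × ↥(SSpace A) => (shiftS A)^[(ω p.1).length] p.2)).mpr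
    fun i => (continuous_shiftS A).iterate (ω i).length).comp
    ((continuous_firstIdx hC).prodMk continuous_id)

noncomputable def codingEquiv : ↥(SSpace A) ≃ ↥(SSpace (matC A ω)) where
  toFun x := ⟨codeSeq hC x, mem_SSpace_matC_of_factors x.2 (factors_codeSeq hC x)⟩
  invFun g := ⟨concatSeq hC.ne g.1, concatSeq_mem hC.ne g.2⟩
  left_inv x := Subtype.ext (eq_concatSeq_of_factors hC.ne (factors_codeSeq hC x)).symm
  right_inv g := Subtype.ext (codeSeq_eq_of_factors hC (factors_concatSeq hC.ne g.1))

theorem continuous_codingEquiv : Continuous (codingEquiv hC) :=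
  Continuous.subtype_mk (continuous_pi fun n =>
    (continuous_firstIdx hC).comp ((continuous_dropStep hC).iterate n)) _

noncomputable def codingHomeomorph : ↥(SSpace A) ≃ₜ ↥(SSpace (matC A ω)) :=
  (continuous_codingEquiv hC).homeoOfEquivCompactToT2

end Coding

theorem coding_orbit_maps_forward_general {N M : ℕ} (A : Mat N)
    (ω : Fin M → List (Fin N)) (hC : IsRightMarkovCode A ω) :
    ∃ h : ↥(SSpace A) ≃ₜ ↥(SSpace (matC A ω)),
      (∀ (x : ↥(SSpace A)) (f : ℕ → Fin M), Factors ω x.1 f → (h x).1 = f) ∧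
      ∃ k₁ l₁ : ↥(SSpace A) → ℕ, Continuous k₁ ∧ Continuous l₁ ∧
        ∀ x, (shiftS (matC A ω))^[k₁ x] (h (shiftS A x)) =
          (shiftS (matC A ω))^[l₁ x] (h x) := by
  obtain ⟨L, hL, hshiftInv⟩ := hC.shiftInv
  choose! tailCode htailCode using hshiftInv
  set h := codingHomeomorph hC
  have hcode : ∀ x f, Factors ω x.1 f → (h x).1 = f := fun x _ => codeSeq_eq_of_factors hC
  have hk : Continuous fun x => (tailCode (Stream'.take L (h x).1)).length :=
    (continuous_of_discreteTopology (f := fun l : List (Fin M) => (tailCode l).length)).comp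
      ((continuous_stream_take L).comp (continuous_subtype_val.comp h.continuous))
  refine ⟨h, hcode, _, fun _ => L, hk, continuous_const, fun x => ?_⟩
  have hf : Factors ω x.1 (h x).1 := factors_codeSeq hC x
  have hne : prefixWord ω (h x).1 L ≠ [] :=
    List.ne_nil_of_length_pos (by have := le_length_prefixWord hC.ne (h x).1 L; omega)
  have htail := htailCode (Stream'.take L (h x).1) (Stream'.length_take _ _)
    ⟨x.1, x.2, begins_prefixWord hf L⟩
  apply Subtype.ext
  rw [shiftS_iterate_val, shiftS_iterate_val, hcode (shiftS A x) _ (factors_shift hf hne htail),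
    Stream'.drop_append_stream]

/-- For the standard coding homeomorphism `h : X_A → X_B` (`B = A(C)`)
there are continuous `k₁, l₁ : X_A → ℤ₊` with
`σ_B^{k₁(x)}(h(σ_A x)) = σ_B^{l₁(x)}(h x)` for all `x`. -/
theorem coding_orbit_maps_forward {N M : ℕ} (A : Mat N)
    (hA : IrreducibleMat A) (hnp : ¬ IsPermMat A)
    (ω : Fin M → List (Fin N)) (hC : IsRightMarkovCode A ω) :
    ∃ h : ↥(SSpace A) ≃ₜ ↥(SSpace (matC A ω)),
      (∀ (x : ↥(SSpace A)) (f : ℕ → Fin M), Factors ω x.1 f → (h x).1 = f) ∧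
      ∃ k₁ l₁ : ↥(SSpace A) → ℕ, Continuous k₁ ∧ Continuous l₁ ∧
        ∀ x, (shiftS (matC A ω))^[k₁ x] (h (shiftS A x)) =
          (shiftS (matC A ω))^[l₁ x] (h x) :=
  coding_orbit_maps_forward_general A ω hC

end TMS
end

section
/- The one-sided golden mean shift (X_{A_1}, σ_{A_1}) with A_1 = [[1,1],[1,0]] is continuously orbit equivalent to the one-sided full 2-shift. -/
/-! A point of the golden mean shift factors uniquely into the blocks `om1 0 = [0]` and
`om1 1 = [1, 0]`, since the symbol `1` is always followed by `0`; the block of a point is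
the one indexed by its first symbol. Sending a point to its sequence of block indices is a
homeomorphism onto the full 2-shift, because each block index is read off a bounded prefix
and, conversely, each symbol of a concatenation of blocks depends only on a bounded prefix
of the index sequence. Shifting the index sequence once removes a whole block, i.e. shifts
the point by the block length `1` or `2`. Shifting the point once either removes a block
`[0]`, or turns a leading `[1, 0]` into `[0]`, in which case the two index sequences differ
only in their first entry. -/

namespace TMS

/-- The golden mean matrix `A₁ = [[1,1],[1,0]]`. -/
def A1 : Mat 2 := fun i j => ![![true, true], ![true, false]] i j

/-- The code `C₁ = {1, 21}` (with symbols `0, 1` standing for `1, 2`). -/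
def om1 : Fin 2 → List (Fin 2) := ![[0], [1, 0]]

theorem continuous_of_cylinder_determined {α X : Type*} [TopologicalSpace α] [DiscreteTopology α]
    [TopologicalSpace X] (F : (ℕ → α) → ℕ → X) (m : ℕ → ℕ)
    (hF : ∀ n x x', x' ∈ PiNat.cylinder x (m n) → F x' n = F x n) : Continuous F :=
  continuous_pi fun n => IsLocallyConstant.continuous <|
    (IsLocallyConstant.iff_exists_open _).2 fun x =>
      ⟨_, PiNat.isOpen_cylinder _ x (m n), PiNat.self_mem_cylinder x (m n), hF n x⟩

section Shift

variable {N : ℕ}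

theorem iterate_shift_apply (x : ℕ → Fin N) (j i : ℕ) : shift^[j] x i = x (i + j) := by
  induction j generalizing x with
  | zero => rfl
  | succ j ih => rw [Function.iterate_succ_apply, ih]; rfl

theorem iterate_shift_mem_SSpace {A : Mat N} {x : ℕ → Fin N} (hx : x ∈ SSpace A) (j : ℕ) :
    shift^[j] x ∈ SSpace A := fun i => by
  simpa only [iterate_shift_apply, Nat.add_right_comm i 1 j] using hx (i + j)

theorem coe_iterate_shiftS (A : Mat N) (j : ℕ) (x : SSpace A) :
    ((shiftS A)^[j] x).1 = shift^[j] x.1 :=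
  Function.Semiconj.iterate_right (f := Subtype.val) (fun _ => rfl) j x

theorem continuous_comp_apply_zero {α : Type*} [TopologicalSpace α] (A : Mat N) (f : Fin N → α) :
    Continuous fun x : SSpace A => f (x.1 0) :=
  continuous_of_discreteTopology.comp ((continuous_apply 0).comp continuous_subtype_val)

end Shift

theorem mem_SSpace_A1_iff {x : ℕ → Fin 2} : x ∈ SSpace A1 ↔ ∀ n, x n = 1 → x (n + 1) = 0 :=
  forall_congr' fun n => by
    generalize x n = a; generalize x (n + 1) = b
    revert a b; decide

theorem fin_two_eq_zero_or_one (a : Fin 2) : a = 0 ∨ a = 1 := by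
  fin_cases a <;> simp

theorem length_om1_pos (a : Fin 2) : 0 < (om1 a).length := by fin_cases a <;> decide

theorem length_om1_le_two (a : Fin 2) : (om1 a).length ≤ 2 := by fin_cases a <;> decide

theorem begins_om1 {x : ℕ → Fin 2} (hx : x ∈ SSpace A1) : Begins x (om1 (x 0)) := by
  have h1 := mem_SSpace_A1_iff.1 hx 0
  intro i hi
  generalize hx0 : x 0 = a at h1 hi ⊢
  fin_cases a
  · obtain rfl : i = 0 := by simpa [om1] using hi
    exact hx0
  · obtain rfl | rfl : i = 0 ∨ i = 1 := by simp [om1] at hi; omega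
    exacts [hx0, h1 rfl]

def blockIndices : (ℕ → Fin 2) → ℕ → Fin 2
  | x, 0 => x 0
  | x, n + 1 => blockIndices (shift^[(om1 (x 0)).length] x) n

def concatBlocks (y : ℕ → Fin 2) (k : ℕ) : Fin 2 :=
  if h : k < (om1 (y 0)).length then (om1 (y 0)).get ⟨k, h⟩
  else concatBlocks (shift y) (k - (om1 (y 0)).length)
termination_by k
decreasing_by have := length_om1_pos (y 0); omega

theorem shift_blockIndices (x : ℕ → Fin 2) :
    shift (blockIndices x) = blockIndices (shift^[(om1 (x 0)).length] x) :=
  rfl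

theorem begins_concatBlocks (y : ℕ → Fin 2) : Begins (concatBlocks y) (om1 (y 0)) :=
  fun k hk => by rw [concatBlocks, dif_pos hk]

theorem concatBlocks_add_length (y : ℕ → Fin 2) (k : ℕ) :
    concatBlocks y (k + (om1 (y 0)).length) = concatBlocks (shift y) k := by
  rw [concatBlocks, dif_neg (by omega), Nat.add_sub_cancel]

theorem concatBlocks_zero (y : ℕ → Fin 2) : concatBlocks y 0 = y 0 := by
  rw [begins_concatBlocks y 0 (length_om1_pos _)]
  generalize y 0 = a; fin_cases a <;> rfl

theorem iterate_shift_concatBlocks (y : ℕ → Fin 2) :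
    shift^[(om1 (y 0)).length] (concatBlocks y) = concatBlocks (shift y) :=
  funext fun k => by rw [iterate_shift_apply, concatBlocks_add_length]

theorem blockIndices_concatBlocks (y : ℕ → Fin 2) : blockIndices (concatBlocks y) = y := by
  funext n
  induction n generalizing y with
  | zero => exact concatBlocks_zero y
  | succ n ih =>
    rw [blockIndices, concatBlocks_zero, iterate_shift_concatBlocks, ih]
    rfl

theorem concatBlocks_blockIndices {x : ℕ → Fin 2} (hx : x ∈ SSpace A1) :
    concatBlocks (blockIndices x) = x := by
  funext k
  induction k using Nat.strong_induction_on generalizing x with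
  | _ k ih =>
    by_cases hk : k < (om1 (x 0)).length
    · exact (begins_concatBlocks (blockIndices x) k hk).trans (begins_om1 hx k hk).symm
    · have hlen := length_om1_pos (x 0)
      obtain ⟨j, rfl⟩ := Nat.exists_eq_add_of_le' (not_lt.1 hk)
      calc concatBlocks (blockIndices x) (j + (om1 (x 0)).length)
          = concatBlocks (blockIndices (shift^[(om1 (x 0)).length] x)) j :=
            concatBlocks_add_length _ j
        _ = x (j + (om1 (x 0)).length) := by
            rw [ih j (by omega) (iterate_shift_mem_SSpace hx _), iterate_shift_apply]

theorem concatBlocks_mem_SSpace (y : ℕ → Fin 2) : concatBlocks y ∈ SSpace A1 := by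
  refine mem_SSpace_A1_iff.2 fun k => ?_
  induction k using Nat.strong_induction_on generalizing y with
  | _ k ih =>
    by_cases hk : k < (om1 (y 0)).length
    · have hb := begins_concatBlocks y
      rcases fin_two_eq_zero_or_one (y 0) with h0 | h0 <;> simp only [h0, om1] at hk hb
      · obtain rfl : k = 0 := by simpa using hk
        simp [hb 0]
      · obtain rfl | rfl : k = 0 ∨ k = 1 := by simp at hk; omega
        all_goals simp [hb 1]
    · have hlen := length_om1_pos (y 0)
      obtain ⟨j, rfl⟩ := Nat.exists_eq_add_of_le' (not_lt.1 hk)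
      rw [Nat.add_right_comm, concatBlocks_add_length, concatBlocks_add_length]
      exact ih j (by omega) (shift y)

theorem iterate_shift_blockIndices_shift {x : ℕ → Fin 2} (hx : x ∈ SSpace A1) :
    shift^[(x 0 : ℕ)] (blockIndices (shift x)) = shift (blockIndices x) := by
  rcases fin_two_eq_zero_or_one (x 0) with h0 | h0
  · rw [shift_blockIndices, h0]
    rfl
  · have h1 : shift x 0 = 0 := mem_SSpace_A1_iff.1 hx 0 h0
    rw [h0, Fin.val_one, Function.iterate_one, shift_blockIndices, shift_blockIndices, h0, h1]
    rfl

theorem blockIndices_apply_eq_of_mem_cylinder (n : ℕ) {x x' : ℕ → Fin 2}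
    (h : x' ∈ PiNat.cylinder x (2 * n + 1)) : blockIndices x' n = blockIndices x n := by
  rw [PiNat.mem_cylinder_iff] at h
  induction n generalizing x x' with
  | zero => exact h 0 (by omega)
  | succ n ih =>
    have hlen := length_om1_le_two (x 0)
    rw [blockIndices, blockIndices, h 0 (by omega)]
    refine ih fun i hi => ?_
    rw [iterate_shift_apply, iterate_shift_apply]
    exact h _ (by omega)

theorem concatBlocks_apply_eq_of_mem_cylinder (k : ℕ) {y y' : ℕ → Fin 2}
    (h : y' ∈ PiNat.cylinder y (k + 1)) : concatBlocks y' k = concatBlocks y k := by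
  rw [PiNat.mem_cylinder_iff] at h
  induction k using Nat.strong_induction_on generalizing y y' with
  | _ k ih =>
    have hlen := length_om1_pos (y 0)
    rw [concatBlocks.eq_1 y' k, concatBlocks.eq_1 y k, h 0 (by omega)]
    split_ifs with hk
    · rfl
    · exact ih _ (by omega) fun i hi => h (i + 1) (by omega)

theorem continuous_blockIndices : Continuous blockIndices :=
  continuous_of_cylinder_determined _ _ fun n _ _ => blockIndices_apply_eq_of_mem_cylinder n

theorem continuous_concatBlocks : Continuous concatBlocks :=
  continuous_of_cylinder_determined _ _ fun k _ _ => concatBlocks_apply_eq_of_mem_cylinder k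

def goldenMeanHomeomorph : SSpace A1 ≃ₜ SSpace ((fun _ _ => true) : Mat 2) where
  toFun x := ⟨blockIndices x.1, fun _ => rfl⟩
  invFun y := ⟨concatBlocks y.1, concatBlocks_mem_SSpace y.1⟩
  left_inv x := Subtype.ext (concatBlocks_blockIndices x.2)
  right_inv y := Subtype.ext (blockIndices_concatBlocks y.1)
  continuous_toFun := (continuous_blockIndices.comp continuous_subtype_val).subtype_mk _
  continuous_invFun := (continuous_concatBlocks.comp continuous_subtype_val).subtype_mk _

/-- The one-sided golden mean shift is continuously orbit equivalent
to the one-sided full 2-shift. -/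
theorem goldenMean_COE_full2 : COE A1 ((fun _ _ => true) : Mat 2) := by
  refine ⟨goldenMeanHomeomorph,
    ⟨fun x => x.1 0, fun _ => 1, ?_, continuous_const, fun x => Subtype.ext ?_⟩,
    ⟨fun _ => 0, fun y => (om1 (y.1 0)).length, continuous_const, ?_, fun y => Subtype.ext ?_⟩⟩
  · exact continuous_comp_apply_zero A1 Fin.val
  · simp only [coe_iterate_shiftS]
    exact iterate_shift_blockIndices_shift x.2
  · exact continuous_comp_apply_zero _ fun a => (om1 a).length
  · simp only [coe_iterate_shiftS]
    exact (iterate_shift_concatBlocks y.1).symm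

end TMS
end
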